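/- arXiv:2406.09529 — 2 statements merged into one kernel-verified Lean document; each statement's English description precedes it below -/
import Mathlib

section
/- Let d be a positive integer and let σ_{r1}, σ_{r2}, σ_r be partial functions encoding ordering constraints: for a relation s with domain I_s ⊆ {1,...,d} and map σ_s : I_s → {1,...,d}, say a pair of vectors (x, y) ∈ ℝ^d × ℝ^d satisfies s if for all i ∈ I_s, x_{σ_s(i)} ≤ y_i. Suppose for every i ∈ I_r we have i ∈ I_{r2}, σ_{r2}(i) ∈ I_{r1}, and σ_{r1}(σ_{r2}(i)) = σ_r(i). Then for all vectors e, f, g ∈ ℝ^d, if (e,f) satisfies r1 and (f,g) satisfies r2, then (e,g) satisfies r. -/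
/-- A pair of vectors `(x, y)` satisfies the ordering constraints given by the
domain `I` and the map `σ` iff `x (σ i) ≤ y i` for all `i ∈ I`. -/
def SatisfiesOrd {d : ℕ} (I : Set (Fin d)) (σ : Fin d → Fin d)
    (x y : Fin d → ℝ) : Prop :=
  ∀ i ∈ I, x (σ i) ≤ y i

theorem stmt_0 {d : ℕ} (hd : 0 < d)
    (I1 I2 Ir : Set (Fin d)) (σ1 σ2 σr : Fin d → Fin d)
    (hcomp : ∀ i ∈ Ir, i ∈ I2 ∧ σ2 i ∈ I1 ∧ σ1 (σ2 i) = σr i) :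
    ∀ e f g : Fin d → ℝ,
      SatisfiesOrd I1 σ1 e f → SatisfiesOrd I2 σ2 f g → SatisfiesOrd Ir σr e g := by
  intro e f g h1 h2 i hi
  obtain ⟨hi2, hσ1, heq⟩ := hcomp i hi
  calc e (σr i) = e (σ1 (σ2 i)) := by rw [heq]
    _ ≤ f (σ2 i) := h1 _ hσ1
    _ ≤ g i := h2 _ hi2
end

section
/- Let H be a labelled multigraph with labels from R ∪ {eq} such that every node has at most one incoming edge per label. Let G be a knowledge graph containing (e, eq, e) for every entity e, and let the GNN embeddings e^{(l)} ∈ ℝ^d be defined by e^{(0)} arbitrary nonnegative and f^{(l+1)} = max({f^{(l)}} ∪ {μ_r(e^{(l)}) : (e,r,f) ∈ G}), where μ_r is the coordinate-reshuffling map induced by the r-edges of H. Then for every entity e and every l ∈ ℕ: e^{(l)} ⪯ max( e^{(0)}, max over paths π in G of length ≤ l ending at e of μ_{rels(π)}(emb_0(head(π))) ), where rels(π) is the sequence of relation labels along the path π, head(π) its starting entity, emb_0 the initial embedding, and μ_{r_1;...;r_p} = μ_{r_p} ∘ ... ∘ μ_{r_1}. -/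
/-- A path in the knowledge graph `G` from entity `a` to entity `e`, whose
sequence of relation labels is `rs`. -/
inductive GPath {E R : Type*} (G : Finset (E × R × E)) : E → List R → E → Prop
  | nil (e : E) : GPath G e [] e
  | cons {a b c : E} {r : R} {rs : List R} :
      (a, r, b) ∈ G → GPath G b rs c → GPath G a (r :: rs) c

lemma GPath.append_edge {E R : Type*} {G : Finset (E × R × E)} {a b c : E} {r : R}
    {rs : List R} (h : GPath G a rs b) (he : (b, r, c) ∈ G) :
    GPath G a (rs ++ [r]) c := by
  induction h with
  | nil e => exact GPath.cons he (GPath.nil c)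
  | cons h1 _ ih => exact GPath.cons h1 (ih he)

lemma fold_max_cases {α β : Type*} [LinearOrder β] (s : Finset α) (b : β) (f : α → β) :
    s.fold max b f = b ∨ ∃ x ∈ s, s.fold max b f = f x := by
  classical
  induction s using Finset.induction_on with
  | empty => left; simp
  | @insert a s ha ih =>
    
    rw [Finset.fold_insert ha]
    rcases le_total (f a) (s.fold max b f) with h | h
    · rw [max_eq_right h]
      rcases ih with h' | ⟨x, hx, h'⟩
      · left; exact h'
      · right; exact ⟨x, Finset.mem_insert_of_mem hx, h'⟩
    · rw [max_eq_left h]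
      right; exact ⟨a, Finset.mem_insert_self a s, rfl⟩

theorem stmt_14 {E R : Type*} [DecidableEq E] {ℓ k : ℕ}
    (H : Set (Fin ℓ × R × Fin ℓ)) (eq : R)
    (huniq : ∀ (j j' i : Fin ℓ) (r : R), (j, r, i) ∈ H → (j', r, i) ∈ H → j = j')
    (G : Finset (E × R × E))
    (hloop : ∀ e : E, (e, eq, e) ∈ G)
    (mu : R → (Fin ℓ × Fin k → ℝ) → (Fin ℓ × Fin k → ℝ))
    (hmu : ∀ (r : R) (x : Fin ℓ × Fin k → ℝ) (i : Fin ℓ) (t : Fin k) (j : Fin ℓ),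
        (j, r, i) ∈ H → mu r x (i, t) = x (j, t))
    (hmu0 : ∀ (r : R) (x : Fin ℓ × Fin k → ℝ) (i : Fin ℓ) (t : Fin k),
        (¬ ∃ j : Fin ℓ, (j, r, i) ∈ H) → mu r x (i, t) = 0)
    (emb : ℕ → E → Fin ℓ × Fin k → ℝ)
    (hinit : ∀ (e : E) (p : Fin ℓ × Fin k), 0 ≤ emb 0 e p)
    (hupdate : ∀ (l : ℕ) (f : E) (p : Fin ℓ × Fin k),
      emb (l + 1) f p =
        (G.filter (fun t => t.2.2 = f)).fold max (emb l f p)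
          (fun t => mu t.2.1 (emb l t.1) p)) :
    ∀ (e : E) (l : ℕ) (p : Fin ℓ × Fin k),
      emb l e p ≤ emb 0 e p ∨
      ∃ (a : E) (rs : List R), rs.length ≤ l ∧ GPath G a rs e ∧
        emb l e p ≤ (rs.foldl (fun y r => mu r y) (emb 0 a)) p := by
  intro e l
  induction l generalizing e with
  | zero => intro p; left; exact le_refl _
  | succ l ih =>
    intro p
    rw [hupdate l e p]
    rcases fold_max_cases (G.filter (fun t => t.2.2 = e)) (emb l e p)
        (fun t => mu t.2.1 (emb l t.1) p) with hf | ⟨x, hx, hf⟩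
    · rw [hf]
      rcases ih e p with h | ⟨a, rs, hlen, hpath, hle⟩
      · left; exact h
      · right; exact ⟨a, rs, hlen.trans (Nat.le_succ l), hpath, hle⟩
    · obtain ⟨a, r, b⟩ := x
      rw [Finset.mem_filter] at hx
      obtain ⟨hxG, hbe⟩ := hx
      simp only at hbe
      subst hbe
      obtain ⟨i, t⟩ := p
      simp only at hf
      by_cases hj : ∃ j : Fin ℓ, (j, r, i) ∈ H
      · obtain ⟨j, hjH⟩ := hj
        rw [hmu r (emb l a) i t j hjH] at hf
        rcases ih a (j, t) with h | ⟨a', rs, hlen, hpath, hle⟩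
        · right
          refine ⟨a, [r], Nat.succ_le_succ (Nat.zero_le l),
            GPath.cons hxG (GPath.nil b), ?_⟩
          rw [hf]
          simp only [List.foldl]
          rw [hmu r (emb 0 a) i t j hjH]
          exact h
        · right
          refine ⟨a', rs ++ [r], ?_, hpath.append_edge hxG, ?_⟩
          · simpa using Nat.succ_le_succ hlen
          · rw [hf, List.foldl_append]
            simp only [List.foldl]
            rw [hmu r _ i t j hjH]
            exact hle
      · rw [hmu0 r (emb l a) i t hj] at hf
        left
        rw [hf]
        exact hinit b (i, t)
end
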